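/- With ℷ_α as defined (ℷ₀ = ℵ₀, ℷ_{α+1} = min{ℷ : 2^ℷ > 2^{ℷ_α}}, suprema at limits), for every ordinal α one has 2^{ℷ_{α+1}} ≤⁺ ded(2^{ℷ_α}), meaning: either 2^{ℷ_{α+1}} < ded(2^{ℷ_α}), or 2^{ℷ_{α+1}} = ded(2^{ℷ_α}) and the supremum defining ded is attained. In particular 2^{ℷ_{α+1}} ≤ ded(2^{ℷ_α}). -/

import Mathlib

open Cardinal

universe u

/-- `D` is a dense subset of the linear order `α`: between any two elements of `α`
there is an element of `D`. -/
def IsDenseSub {α : Type u} [LinearOrder α] (D : Set α) : Prop :=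
  ∀ a b : α, a < b → ∃ d ∈ D, a ≤ d ∧ d ≤ b

/-- `ded κ`: the supremum of the cardinalities of linear orders having a dense subset
of size at most `κ`. -/
noncomputable def ded (κ : Cardinal.{u}) : Cardinal.{u} :=
  sSup {c : Cardinal.{u} | ∃ (α : Type u) (_ : LinearOrder α) (D : Set α),
    IsDenseSub D ∧ #D ≤ κ ∧ c = #α}


/-- The gimel sequence: `ℷ₀ = ℵ₀`, `ℷ_{α+1} = min {ℷ : 2^ℷ > 2^{ℷ_α}}`, and
`ℷ_α = Σ_{β<α} ℷ_β` for limit `α`. -/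
noncomputable def gimel (α : Ordinal.{u}) : Cardinal.{u} :=
  Ordinal.limitRecOn α
    ℵ₀
    (fun _ g => sInf {c : Cardinal.{u} | (2 : Cardinal.{u}) ^ g < 2 ^ c})
    (fun o _ IH => Cardinal.sum fun i : o.ToType =>
      IH (@Ordinal.typein o.ToType (· < ·) isWellOrder_lt i)
        (Ordinal.typein_lt_self i))

/-!
Let `κ = ℷ_{α+1}` and order the branches `κ → Bool` of the binary tree of height `κ`
lexicographically: a linear order of size `2^κ`. The eventually-`true` branches are dense, and
each is determined by a node `Iic i → Bool` with `i < κ`. By minimality of `ℷ_{α+1}`,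
`2^c ≤ 2^{ℷ_α}` for every `c < κ`, so there are at most `κ · 2^{ℷ_α} = 2^{ℷ_α}` nodes. Hence
`2^κ ≤ ded (2^{ℷ_α})`, and in case of equality this order attains the supremum.
-/

open Set

theorem IsDenseSub.mk_le {α : Type u} [LinearOrder α] {D : Set α} (hD : IsDenseSub D) :
    #α ≤ 2 ^ #D * 2 ^ #D := by
  let cut : α → Set D × Set D := fun x => ({d | (d : α) < x}, {d | (d : α) ≤ x})
  have hcut : StrictMono cut := by
    intro x y hxy
    obtain ⟨d, hdD, hxd, hdy⟩ := hD x y hxy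
    rcases hxd.eq_or_lt with rfl | hxd
    · refine Prod.lt_iff.2 (Or.inl ⟨?_, fun e (he : (e : α) ≤ x) => he.trans hdy⟩)
      exact ssubset_of_subset_not_subset (fun e (he : (e : α) < x) => he.trans hxy)
        fun h => lt_irrefl x (h (show (⟨x, hdD⟩ : D) ∈ {e : D | (e : α) < y} from hxy))
    · refine Prod.lt_iff.2 (Or.inr ⟨fun e (he : (e : α) < x) => he.trans hxy, ?_⟩)
      exact ssubset_of_subset_not_subset (fun e (he : (e : α) ≤ x) => he.trans hxy.le)
        fun h => hxd.not_ge (h (show (⟨d, hdD⟩ : D) ∈ {e : D | (e : α) ≤ y} from hdy))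
  simpa [mk_set] using mk_le_of_injective hcut.injective

theorem le_ded {α : Type u} [LinearOrder α] {D : Set α} (hD : IsDenseSub D) {κ : Cardinal.{u}}
    (hDκ : #D ≤ κ) : #α ≤ ded κ := by
  refine le_csSup ⟨2 ^ κ * 2 ^ κ, ?_⟩ ⟨α, inferInstance, D, hD, hDκ, rfl⟩
  rintro _ ⟨β, _, E, hE, hEκ, rfl⟩
  have h2 : (2 : Cardinal) ^ #E ≤ 2 ^ κ := power_le_power_left two_ne_zero hEκ
  exact hE.mk_le.trans (mul_le_mul' h2 h2)

def eventuallyTrue (ι : Type u) [LT ι] : Set (Lex (ι → Bool)) :=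
  {f | ∃ i, ∀ j, i < j → ofLex f j = true}

theorem isDenseSub_eventuallyTrue (ι : Type u) [LinearOrder ι] [WellFoundedLT ι] :
    IsDenseSub (eventuallyTrue ι) := by
  rintro a b ⟨i, hab, hi⟩
  let d : Lex (ι → Bool) := toLex fun j => if j ≤ i then ofLex a j else true
  refine ⟨d, ⟨i, fun j hj => if_neg hj.not_ge⟩, Pi.toLex_monotone fun j => ?_,
    le_of_lt ⟨i, fun j hj => ?_, ?_⟩⟩
  · by_cases hj : j ≤ i <;> simp [hj]
  · simp [d, hj.le, hab j hj]
  · simpa [d] using hi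

theorem mk_eventuallyTrue_le (ι : Type u) [LinearOrder ι] :
    #(eventuallyTrue ι) ≤ sum fun i : ι => 2 ^ #(Iic i) := by
  let extend : (Σ i : ι, (Iic i → Bool)) → Lex (ι → Bool) := fun p =>
    toLex fun j => if h : j ≤ p.1 then p.2 ⟨j, h⟩ else true
  have hrange : eventuallyTrue ι ⊆ range extend := by
    rintro f ⟨i, hf⟩
    refine ⟨⟨i, fun j => ofLex f j⟩, funext fun j => ?_⟩
    by_cases hj : j ≤ i
    · simp [extend, hj]
    · simpa [extend, hj] using (hf j (not_le.1 hj)).symm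
  calc #(eventuallyTrue ι) ≤ #(range extend) := mk_le_mk_of_subset hrange
    _ ≤ #(Σ i : ι, (Iic i → Bool)) := mk_range_le
    _ = _ := by simp

theorem mk_eventuallyTrue_le_of_two_pow_le {ι : Type u} [LinearOrder ι] [WellFoundedLT ι]
    (hι : (#ι).ord = Ordinal.type (α := ι) (· < ·)) (hinf : ℵ₀ ≤ #ι) {μ : Cardinal.{u}}
    (hμ : ∀ c < #ι, 2 ^ c ≤ μ) : #(eventuallyTrue ι) ≤ μ := by
  have hιμ : #ι ≤ μ := not_lt.1 fun h => (cantor μ).not_ge (hμ μ h)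
  have hIic : ∀ i : ι, #(Iic i) < #ι := fun i => by
    rw [← Iio_insert]
    exact mk_insert_le.trans_lt
      (add_lt_of_lt hinf (mk_Iio_lt i hι) (one_lt_aleph0.trans_le hinf))
  calc #(eventuallyTrue ι) ≤ sum fun i : ι => 2 ^ #(Iic i) := mk_eventuallyTrue_le ι
    _ ≤ sum fun _ : ι => μ := sum_le_sum _ _ fun i => hμ _ (hIic i)
    _ = #ι * μ := sum_const' _ _
    _ = μ := mul_eq_right (hinf.trans hιμ) hιμ (aleph0_pos.trans_le hinf).ne'

theorem exists_isDenseSub_mk_eq_two_pow {κ μ : Cardinal.{u}} (hκ : ℵ₀ ≤ κ)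
    (hμ : ∀ c < κ, 2 ^ c ≤ μ) :
    ∃ (β : Type u) (_ : LinearOrder β) (D : Set β), IsDenseSub D ∧ #D ≤ μ ∧ #β = 2 ^ κ := by
  have hι : #κ.ord.ToType = κ := mk_ord_toType κ
  refine ⟨Lex (κ.ord.ToType → Bool), inferInstance, eventuallyTrue _,
    isDenseSub_eventuallyTrue _, ?_, show #(_ → Bool) = _ by simp [hι]⟩
  refine mk_eventuallyTrue_le_of_two_pow_le ?_ ?_ ?_ <;> rw [hι]
  exacts [(Ordinal.type_toType _).symm, hκ, hμ]

theorem gimel_zero : gimel 0 = ℵ₀ :=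
  Ordinal.limitRecOn_zero _ _ _

theorem gimel_succ (α : Ordinal.{u}) :
    gimel (α + 1) = sInf {c : Cardinal.{u} | (2 : Cardinal.{u}) ^ gimel α < 2 ^ c} :=
  Ordinal.limitRecOn_add_one _ _ _ _

theorem gimel_limit {o : Ordinal.{u}} (ho : Order.IsSuccLimit o) :
    gimel o = sum fun i : o.ToType => gimel (Ordinal.typein (α := o.ToType) (· < ·) i) :=
  Ordinal.limitRecOn_limit _ _ _ _ ho

theorem two_pow_gimel_lt_two_pow_gimel_succ (α : Ordinal.{u}) :
    (2 : Cardinal.{u}) ^ gimel α < 2 ^ gimel (α + 1) := by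
  rw [gimel_succ]
  exact csInf_mem (s := {c : Cardinal.{u} | (2 : Cardinal.{u}) ^ gimel α < 2 ^ c}) ⟨_, cantor _⟩

theorem two_pow_le_two_pow_gimel_of_lt_gimel_succ {α : Ordinal.{u}} {c : Cardinal.{u}}
    (hc : c < gimel (α + 1)) : (2 : Cardinal.{u}) ^ c ≤ 2 ^ gimel α := by
  rw [gimel_succ] at hc
  exact not_lt.1 fun h => hc.not_ge (csInf_le' h)

theorem gimel_lt_gimel_succ (α : Ordinal.{u}) : gimel α < gimel (α + 1) :=
  not_le.1 fun h =>
    (two_pow_gimel_lt_two_pow_gimel_succ α).not_ge (power_le_power_left two_ne_zero h)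

theorem aleph0_le_gimel (α : Ordinal.{u}) : ℵ₀ ≤ gimel α := by
  induction α using Ordinal.limitRecOn with
  | zero => exact gimel_zero.ge
  | add_one β ih => exact ih.trans (gimel_lt_gimel_succ β).le
  | limit o ho ih =>
      obtain ⟨i⟩ := Ordinal.nonempty_toType_iff.2 ho.ne_bot
      rw [gimel_limit ho]
      exact (ih _ (Ordinal.typein_lt_self i)).trans (le_sum _ i)

theorem stmt7 (α : Ordinal.{u}) :
    ((2 : Cardinal.{u}) ^ gimel (α + 1) < ded (2 ^ gimel α) ∨
      ((2 : Cardinal.{u}) ^ gimel (α + 1) = ded (2 ^ gimel α) ∧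
        ∃ (β : Type u) (_ : LinearOrder β) (D : Set β),
          IsDenseSub D ∧ #D ≤ 2 ^ gimel α ∧ #β = ded (2 ^ gimel α))) ∧
    (2 : Cardinal.{u}) ^ gimel (α + 1) ≤ ded (2 ^ gimel α) := by
  obtain ⟨β, _, D, hD, hDμ, hβ⟩ := exists_isDenseSub_mk_eq_two_pow (aleph0_le_gimel (α + 1))
    fun _ => two_pow_le_two_pow_gimel_of_lt_gimel_succ
  have hle : (2 : Cardinal.{u}) ^ gimel (α + 1) ≤ ded (2 ^ gimel α) := hβ ▸ le_ded hD hDμ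
  exact ⟨hle.lt_or_eq.imp_right fun h => ⟨h, β, _, D, hD, hDμ, hβ.trans h⟩, hle⟩
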